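/- arXiv:1706.08050 — 2 statements merged into one kernel-verified Lean document; each statement's English description precedes it below -/
import Mathlib

section
/- Every minimal odd cycle transversal of a graph G equals V(G) \ (X ∪ Y) for some maximal independent set X of G and some maximal independent set Y of G - X. Consequently, for every constant s ≥ 1, an sP_2-free graph on n vertices has at most (n^{2s} + 1)² minimal odd cycle transversals. -/
/-!
Let `S` be a minimal odd cycle transversal and `(X, Y)` a bipartition of `G - S` with `X`
inclusion-maximal. Every vertex of `Y` has a neighbour in `X`, and by minimality every vertex of
`S` has a neighbour in `X` and one in `Y` (otherwise it could join that side). So `X` is a maximal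
independent set of `G`, `Y` is one of `G - X`, and `S` is determined by `(X, Y)`.

The count then follows from the Balas–Yu bound for every induced subgraph `G[W]`. If `W` is not
independent, a maximal independent set `S` of `G[W]` has a pivot: a vertex `b ∈ W \ S` whose
neighbourhood in `S` is inclusion-minimal, and a neighbour `a ∈ S` of `b`. Given the pivot, `S` is
recovered from its trace on `W` minus the closed neighbourhoods of `a` and `b`, which is a maximal
independent set there; and that smaller set contains no induced `(s - 1)P₂`, since adding the edge
`ab` to one would give an induced `sP₂` in `W`. Induction on `s` bounds the count by `n ^ (2 s)`
(by `1` when `n = 0`).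
-/

open SimpleGraph

namespace Paper

variable {V : Type*}

/-- `S` is an independent set of `G`. -/
def IsIndep (G : SimpleGraph V) (S : Set V) : Prop :=
  S.Pairwise fun a b => ¬ G.Adj a b

/-- `S` is a maximal independent set of `G`. -/
def IsMaxIndep (G : SimpleGraph V) (S : Set V) : Prop :=
  IsIndep G S ∧ ∀ v ∉ S, ¬ IsIndep G (insert v S)

/-- `S` is a maximal independent set of the subgraph of `G` induced by `W`. -/
def IsMaxIndepIn (G : SimpleGraph V) (W S : Set V) : Prop :=
  S ⊆ W ∧ IsIndep G S ∧ ∀ v ∈ W, v ∉ S → ∃ w ∈ S, G.Adj v w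

/-- `S` is an odd cycle transversal of `G`: deleting `S` leaves a bipartite graph. -/
def IsOCT (G : SimpleGraph V) (S : Set V) : Prop :=
  (G.induce (Sᶜ : Set V)).Colorable 2

/-- `S` is a minimal odd cycle transversal of `G`. -/
def IsMinOCT (G : SimpleGraph V) (S : Set V) : Prop :=
  IsOCT G S ∧ ∀ T ⊂ S, ¬ IsOCT G T

/-- `S` is a feedback vertex set of `G`: deleting `S` leaves a forest. -/
def IsFVS (G : SimpleGraph V) (S : Set V) : Prop :=
  (G.induce (Sᶜ : Set V)).IsAcyclic

/-- `S` is a minimal feedback vertex set of `G`. -/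
def IsMinFVS (G : SimpleGraph V) (S : Set V) : Prop :=
  IsFVS G S ∧ ∀ T ⊂ S, ¬ IsFVS G T

/-- `S` is a vertex cover of `G`. -/
def IsVC (G : SimpleGraph V) (S : Set V) : Prop :=
  ∀ ⦃a b⦄, G.Adj a b → a ∈ S ∨ b ∈ S

/-- `S` induces a connected subgraph of `G`. -/
def ConnSet (G : SimpleGraph V) (S : Set V) : Prop :=
  (G.induce S).Connected

/-- The graph `sP₂`: the disjoint union of `s` copies of an edge. -/
def sP2 (s : ℕ) : SimpleGraph (Fin s × Fin 2) where
  Adj p q := p.1 = q.1 ∧ p.2 ≠ q.2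
  symm := ⟨fun _ _ h => ⟨h.1.symm, h.2.symm⟩⟩
  loopless := ⟨fun _ h => h.2 rfl⟩

/-- `G` contains an induced subgraph isomorphic to `H`. -/
def HasInducedIso {W : Type*} (G : SimpleGraph V) (H : SimpleGraph W) : Prop :=
  ∃ T : Set V, Nonempty (G.induce T ≃g H)

/-- `G` is `sP₂`-free. -/
def sP2Free (s : ℕ) (G : SimpleGraph V) : Prop :=
  ¬ HasInducedIso G (sP2 s)

/-- `G` is claw-free: it has no induced `K_{1,3}`. -/
def ClawFree (G : SimpleGraph V) : Prop :=
  ¬ HasInducedIso G (completeBipartiteGraph (Fin 1) (Fin 3))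

/-- `G` has an even cycle factor: a spanning 2-regular subgraph with no odd cycle. -/
def HasEvenCycleFactor (G : SimpleGraph V) : Prop :=
  ∃ H : SimpleGraph V, H ≤ G ∧ (∀ v, (H.neighborSet v).ncard = 2) ∧ H.Colorable 2

/-- The number of neighbours of `v` inside the set `F`. -/
noncomputable def degIn (G : SimpleGraph V) (F : Set V) (v : V) : ℕ :=
  {w | w ∈ F ∧ G.Adj v w}.ncard

/-- `{x, y}` is a component of `G[F]` isomorphic to `P₂`. -/
def IsP2Comp (G : SimpleGraph V) (F : Set V) (x y : V) : Prop :=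
  x ∈ F ∧ y ∈ F ∧ G.Adj x y ∧
  (∀ w ∈ F, G.Adj x w → w = y) ∧ (∀ w ∈ F, G.Adj y w → w = x)

/-- `F'` is a skeleton of the forest `G[F]`: all vertices of degree at least 2 in `G[F]`
together with exactly one vertex from each `P₂`-component. -/
def IsSkeleton (G : SimpleGraph V) (F F' : Set V) : Prop :=
  F' ⊆ F ∧ (∀ v ∈ F, 2 ≤ degIn G F v → v ∈ F') ∧
  (∀ v ∈ F', 2 ≤ degIn G F v ∨ ∃ y, IsP2Comp G F v y) ∧
  (∀ x y, IsP2Comp G F x y → (x ∈ F' ↔ y ∉ F'))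

section Independence

variable {G : SimpleGraph V}

lemma IsIndep.not_adj {S : Set V} {a b : V} (h : IsIndep G S) (ha : a ∈ S) (hb : b ∈ S) :
    ¬ G.Adj a b :=
  fun hab => h ha hb hab.ne hab

lemma isIndep_insert_iff {S : Set V} {v : V} :
    IsIndep G (insert v S) ↔ IsIndep G S ∧ ∀ w ∈ S, ¬ G.Adj v w := by
  refine Set.pairwise_insert.trans (and_congr_right fun _ => forall₂_congr fun w _ => ?_)
  exact ⟨fun h hvw => (h hvw.ne).1 hvw, fun h _ => ⟨h, fun hwv => h hwv.symm⟩⟩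

lemma isMaxIndep_iff {X : Set V} :
    IsMaxIndep G X ↔ IsIndep G X ∧ ∀ v ∉ X, ∃ w ∈ X, G.Adj v w :=
  and_congr_right fun hX => forall₂_congr fun v _ => by simp [isIndep_insert_iff, hX]

lemma IsMaxIndep.isMaxIndepIn_univ {X : Set V} (h : IsMaxIndep G X) :
    IsMaxIndepIn G Set.univ X :=
  ⟨Set.subset_univ X, h.1, fun v _ hv => (isMaxIndep_iff.1 h).2 v hv⟩

lemma IsMaxIndepIn.eq_of_forall_not_adj {W S : Set V} (hS : IsMaxIndepIn G W S)
    (hW : ∀ x ∈ W, ∀ y ∈ W, ¬ G.Adj x y) : S = W := by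
  refine hS.1.antisymm fun v hv => ?_
  by_contra hvS
  obtain ⟨w, hw, hvw⟩ := hS.2.2 v hv hvS
  exact hW v hv w (hS.1 hw) hvw

lemma colorable_two_induce_iff {W : Set V} :
    (G.induce W).Colorable 2 ↔ ∃ X ⊆ W, IsIndep G X ∧ IsIndep G (W \ X) := by
  classical
  constructor
  · rintro ⟨C⟩
    refine ⟨Subtype.val '' (C ⁻¹' {0}), by simp, ?_, ?_⟩
    · rintro _ ⟨u, hu, rfl⟩ _ ⟨w, hw, rfl⟩ - huw
      exact C.valid huw (hu.trans hw.symm)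
    · have hC (v : W) (hv : (v : V) ∉ Subtype.val '' (C ⁻¹' {0})) : C v = 1 := by
        have : C v ≠ 0 := fun h => hv ⟨v, h, rfl⟩
        omega
      rintro u ⟨hu, hu0⟩ w ⟨hw, hw0⟩ - huw
      exact C.valid (v := ⟨u, hu⟩) (w := ⟨w, hw⟩) huw
        ((hC ⟨u, hu⟩ hu0).trans (hC ⟨w, hw⟩ hw0).symm)
  · rintro ⟨X, -, hX, hY⟩
    refine ⟨Coloring.mk (fun w => if (w : V) ∈ X then 0 else 1) fun {u w} huw hc => ?_⟩
    by_cases hu : (u : V) ∈ X <;> by_cases hw : (w : V) ∈ X <;> simp [hu, hw] at hc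
    · exact hX hu hw (G.ne_of_adj huw) huw
    · exact hY ⟨u.2, hu⟩ ⟨w.2, hw⟩ (G.ne_of_adj huw) huw

end Independence

section OddCycleTransversal

variable {G : SimpleGraph V} {S : Set V}

lemma IsMinOCT.exists_adj {X : Set V} (hS : IsMinOCT G S) (hXS : X ⊆ Sᶜ) (hX : IsIndep G X)
    (hY : IsIndep G (Sᶜ \ X)) {v : V} (hv : v ∈ S) : ∃ x ∈ X, G.Adj v x := by
  by_contra! hvX
  have hcompl : (S \ {v})ᶜ \ insert v X = Sᶜ \ X := by
    ext u; by_cases hu : u = v <;> simp [hu, hv]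
  refine hS.2 (S \ {v}) (Set.sdiff_singleton_ssubset.2 hv)
    (colorable_two_induce_iff.2 ⟨insert v X, ?_, isIndep_insert_iff.2 ⟨hX, hvX⟩, hcompl ▸ hY⟩)
  exact Set.insert_subset (by simp) (hXS.trans (Set.compl_subset_compl.2 Set.sdiff_subset))

theorem IsMinOCT.exists_isMaxIndep [Finite V] (hS : IsMinOCT G S) :
    ∃ X Y : Set V, IsMaxIndep G X ∧ IsMaxIndepIn G (Xᶜ : Set V) Y ∧ S = (X ∪ Y)ᶜ := by
  obtain ⟨X, ⟨hXS, hX, hY⟩, hXmax⟩ :=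
    (Set.toFinite {X | X ⊆ Sᶜ ∧ IsIndep G X ∧ IsIndep G (Sᶜ \ X)}).exists_maximal
      (colorable_two_induce_iff.1 hS.1)
  have hYX : ∀ y ∈ Sᶜ \ X, ∃ x ∈ X, G.Adj y x := by
    intro y hy
    by_contra! hyX
    refine hy.2 (hXmax ⟨Set.insert_subset hy.1 hXS, isIndep_insert_iff.2 ⟨hX, hyX⟩,
      hY.mono (Set.sdiff_subset_sdiff_right (Set.subset_insert y X))⟩ (Set.subset_insert y X)
      (Set.mem_insert y X))
  have hSY : ∀ v ∈ S, ∃ y ∈ Sᶜ \ X, G.Adj v y := fun v hv =>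
    hS.exists_adj Set.sdiff_subset hY (by rwa [Set.sdiff_sdiff_cancel_left hXS]) hv
  refine ⟨X, Sᶜ \ X, isMaxIndep_iff.2 ⟨hX, fun v hvX => ?_⟩,
    ⟨fun y hy => hy.2, hY, fun v hvX hvY => hSY v ?_⟩, ?_⟩
  · by_cases hv : v ∈ S
    · exact hS.exists_adj hXS hX hY hv
    · exact hYX v ⟨hv, hvX⟩
  · by_contra hv
    exact hvY ⟨hv, hvX⟩
  · rw [Set.union_sdiff_cancel hXS, compl_compl]

end OddCycleTransversal

section InducedMatching

variable {G : SimpleGraph V} {W : Set V} {a b : V}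

def pivotRest (G : SimpleGraph V) (W : Set V) (a b : V) : Set V :=
  W \ (insert a (G.neighborSet a) ∪ insert b (G.neighborSet b))

lemma mem_pivotRest {v : V} :
    v ∈ pivotRest G W a b ↔ v ∈ W ∧ (v ≠ a ∧ ¬ G.Adj a v) ∧ v ≠ b ∧ ¬ G.Adj b v := by
  simp only [pivotRest, Set.mem_sdiff, Set.mem_union, Set.mem_insert_iff, mem_neighborSet,
    not_or]

lemma sP2_eq_of_forall_adj_iff {k : ℕ} {p q : Fin k × Fin 2}
    (h : ∀ r, (sP2 k).Adj p r ↔ (sP2 k).Adj q r) : p = q := by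
  obtain ⟨i, j⟩ := p
  obtain ⟨i', j'⟩ := q
  obtain ⟨hi, hj⟩ := (h (i, j + 1)).1 ⟨rfl, by simp⟩
  simp only at hi hj
  subst hi
  fin_cases j <;> fin_cases j' <;> simp_all

lemma exists_sP2_embedding {k : ℕ} (f : Fin k × Fin 2 → V)
    (hf : ∀ p q, G.Adj (f p) (f q) ↔ (sP2 k).Adj p q) : ∃ e : sP2 k ↪g G, ⇑e = f :=
  ⟨⟨⟨f, fun _ _ hpq => sP2_eq_of_forall_adj_iff fun r => by rw [← hf, ← hf, hpq]⟩, hf _ _⟩, rfl⟩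

lemma not_sP2Free_of_embedding {k : ℕ} (e : sP2 k ↪g G) : ¬ sP2Free k G :=
  fun h => h ⟨_, ⟨e.isoInduceRange.symm⟩⟩

lemma exists_sP2_embedding_succ {k : ℕ} (e : sP2 k ↪g G)
    (he : Set.range e ⊆ pivotRest G W a b)
    (ha : a ∈ W) (hb : b ∈ W) (hab : G.Adj a b) :
    ∃ e' : sP2 (k + 1) ↪g G, Set.range e' ⊆ W := by
  have hout : ∀ p, ¬ G.Adj a (e p) ∧ ¬ G.Adj b (e p) := fun p =>
    have h := mem_pivotRest.1 (he ⟨p, rfl⟩)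
    ⟨h.2.1.2, h.2.2.2⟩
  set f : Fin (k + 1) × Fin 2 → V := fun p =>
    Fin.cons (α := fun _ => Fin 2 → V) ![a, b] (fun i j => e (i, j)) p.1 p.2 with hf
  have hadj : ∀ p q, G.Adj (f p) (f q) ↔ (sP2 (k + 1)).Adj p q := by
    rintro ⟨i, j⟩ ⟨i', j'⟩
    cases i using Fin.cases <;> cases i' using Fin.cases
    · fin_cases j <;> fin_cases j' <;> simp [hf, sP2, hab, hab.symm]
    · fin_cases j <;> simp [hf, sP2, (Fin.succ_ne_zero _).symm]
      exacts [(hout _).1, (hout _).2]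
    · fin_cases j' <;> simp [hf, sP2, G.adj_comm, Fin.succ_ne_zero]
      exacts [(hout _).1, (hout _).2]
    · simp only [hf, Fin.cons_succ]
      rw [e.map_adj_iff]
      simp [sP2]
  obtain ⟨e', he'⟩ := exists_sP2_embedding f hadj
  refine ⟨e', ?_⟩
  rintro _ ⟨⟨i, j⟩, rfl⟩
  rw [he']
  cases i using Fin.cases
  · fin_cases j <;> simpa [hf]
  · exact (mem_pivotRest.1 (he ⟨_, rfl⟩)).1

end InducedMatching

section BalasYu

variable {G : SimpleGraph V} {W S : Set V} {a b : V}

def IsPivot (G : SimpleGraph V) (W S : Set V) (a b : V) : Prop :=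
  MinimalFor (· ∈ W \ S) (fun v => S ∩ G.neighborSet v) b ∧ a ∈ S ∧ G.Adj b a

lemma IsMaxIndepIn.exists_isPivot [Finite V] (hS : IsMaxIndepIn G W S)
    (hWS : (W \ S).Nonempty) : ∃ a b, IsPivot G W S a b := by
  obtain ⟨b, hb⟩ := (W \ S).toFinite.exists_minimalFor (fun v => S ∩ G.neighborSet v) _ hWS
  obtain ⟨a, ha, hba⟩ := hS.2.2 b hb.1.1 hb.1.2
  exact ⟨a, b, hb, ha, hba⟩

lemma IsPivot.isMaxIndepIn_pivotRest (hS : IsMaxIndepIn G W S) (hp : IsPivot G W S a b) :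
    IsMaxIndepIn G (pivotRest G W a b) (S ∩ pivotRest G W a b) := by
  refine ⟨Set.inter_subset_right, hS.2.1.mono Set.inter_subset_left, fun v hv hvS => ?_⟩
  obtain ⟨hvW, ⟨-, hav⟩, -⟩ := mem_pivotRest.1 hv
  by_contra! hv_rest
  have hsub : S ∩ G.neighborSet v ⊆ S ∩ G.neighborSet b := by
    rintro u ⟨huS, hvu⟩
    by_contra hbu
    refine hv_rest u
      ⟨huS, mem_pivotRest.2 ⟨hS.1 huS, ⟨?_, hS.2.1.not_adj hp.2.1 huS⟩, ?_, ?_⟩⟩ hvu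
    · rintro rfl
      exact hav hvu.symm
    · rintro rfl
      exact hp.1.1.2 huS
    · exact fun hbu' => hbu ⟨huS, hbu'⟩
  have hva : a ∈ S ∩ G.neighborSet v :=
    hp.1.2 ⟨hvW, fun h => hvS ⟨h, hv⟩⟩ hsub ⟨hp.2.1, hp.2.2⟩
  exact hav hva.2.symm

lemma IsPivot.subset_of_inter_eq {S' : Set V} (hS : IsMaxIndepIn G W S)
    (hp : IsPivot G W S a b) (hS' : IsMaxIndepIn G W S') (ha : a ∈ S')
    (heq : S ∩ pivotRest G W a b = S' ∩ pivotRest G W a b) : S ⊆ S' := by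
  intro u huS
  by_contra huS'
  obtain ⟨w, hwS', huw⟩ := hS'.2.2 u (hS.1 huS) huS'
  have hwS : w ∉ S := fun h => hS.2.1.not_adj huS h huw
  by_cases hsub : S ∩ G.neighborSet w ⊆ S ∩ G.neighborSet b
  · have hwa : a ∈ S ∩ G.neighborSet w := hp.1.2 ⟨hS'.1 hwS', hwS⟩ hsub ⟨hp.2.1, hp.2.2⟩
    exact hS'.2.1.not_adj hwS' ha hwa.2
  · obtain ⟨t, ⟨htS, hwt⟩, htb⟩ := Set.not_subset.1 hsub
    have ht : t ∈ S ∩ pivotRest G W a b := by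
      refine ⟨htS, mem_pivotRest.2 ⟨hS.1 htS, ⟨?_, hS.2.1.not_adj hp.2.1 htS⟩, ?_, ?_⟩⟩
      · rintro rfl
        exact hS'.2.1.not_adj hwS' ha hwt
      · rintro rfl
        exact hp.1.1.2 htS
      · exact fun hbt => htb ⟨htS, hbt⟩
    exact hS'.2.1.not_adj hwS' (heq ▸ ht).1 hwt

lemma ncard_setOf_isPivot_le [Finite V] :
    {S | IsMaxIndepIn G W S ∧ IsPivot G W S a b}.ncard ≤
      {S | IsMaxIndepIn G (pivotRest G W a b) S}.ncard :=
  Set.ncard_le_ncard_of_injOn (· ∩ pivotRest G W a b)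
    (fun _ hS => hS.2.isMaxIndepIn_pivotRest hS.1)
    (fun _ hS _ hS' heq => (hS.2.subset_of_inter_eq hS.1 hS'.1 hS'.2.2.1 heq).antisymm
      (hS'.2.subset_of_inter_eq hS'.1 hS.1 hS.2.2.1 heq.symm))

theorem ncard_setOf_isMaxIndepIn_le [Fintype V] (s : ℕ) (W : Set V)
    (hW : ¬ ∃ e : sP2 s ↪g G, Set.range e ⊆ W) :
    {S | IsMaxIndepIn G W S}.ncard ≤ max 1 (Fintype.card V) ^ (2 * s) := by
  induction s generalizing W with
  | zero =>
    obtain ⟨e⟩ : sP2 0 ⊴ G := .of_isEmpty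
    exact (hW ⟨e, by rintro _ ⟨⟨i, _⟩, -⟩; exact i.elim0⟩).elim
  | succ s ih =>
    set n := Fintype.card V
    by_cases hedge : ∃ x ∈ W, ∃ y ∈ W, G.Adj x y
    · obtain ⟨x, hx, y, hy, hxy⟩ := hedge
      have hcover : {S | IsMaxIndepIn G W S} ⊆
          ⋃ p : V × V, {S | IsMaxIndepIn G W S ∧ IsPivot G W S p.1 p.2} := by
        intro S hS
        have hWS : (W \ S).Nonempty := by
          by_contra h
          rw [Set.not_nonempty_iff_eq_empty, Set.sdiff_eq_empty] at h
          exact hS.2.1.not_adj (h hx) (h hy) hxy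
        obtain ⟨a, b, hp⟩ := hS.exists_isPivot hWS
        exact Set.mem_iUnion.2 ⟨(a, b), hS, hp⟩
      have hfiber (p : V × V) :
          {S | IsMaxIndepIn G W S ∧ IsPivot G W S p.1 p.2}.ncard ≤ max 1 n ^ (2 * s) := by
        obtain h | ⟨S, hS, hp⟩ := Set.eq_empty_or_nonempty
          {S | IsMaxIndepIn G W S ∧ IsPivot G W S p.1 p.2}
        · simp [h]
        · refine ncard_setOf_isPivot_le.trans (ih _ fun ⟨e, he⟩ => hW ?_)
          exact exists_sP2_embedding_succ e he (hS.1 hp.2.1) hp.1.1.1 hp.2.2.symm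
      calc {S | IsMaxIndepIn G W S}.ncard
          ≤ (⋃ p : V × V, {S | IsMaxIndepIn G W S ∧ IsPivot G W S p.1 p.2}).ncard :=
            Set.ncard_le_ncard hcover
        _ ≤ ∑ p : V × V, {S | IsMaxIndepIn G W S ∧ IsPivot G W S p.1 p.2}.ncard :=
            Set.ncard_iUnion_le_of_fintype _
        _ ≤ ∑ _p : V × V, max 1 n ^ (2 * s) := Finset.sum_le_sum fun p _ => hfiber p
        _ = n ^ 2 * max 1 n ^ (2 * s) := by simp [n, sq]
        _ ≤ max 1 n ^ 2 * max 1 n ^ (2 * s) := by gcongr; exact le_max_right 1 n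
        _ = max 1 n ^ (2 * (s + 1)) := by ring
    · push Not at hedge
      calc {S | IsMaxIndepIn G W S}.ncard
          ≤ ({W} : Set (Set V)).ncard :=
            Set.ncard_le_ncard fun S hS => hS.eq_of_forall_not_adj hedge
        _ = 1 := Set.ncard_singleton W
        _ ≤ max 1 n ^ (2 * (s + 1)) := Nat.one_le_pow _ _ (by positivity)

end BalasYu

lemma max_one_pow_le_pow_add_one (n k : ℕ) : max 1 n ^ k ≤ n ^ k + 1 := by
  rcases Nat.eq_zero_or_pos n with rfl | hn
  · simp
  · rw [max_eq_right hn]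
    exact Nat.le_succ _

theorem ncard_setOf_isMinOCT_le [Finite V] {G : SimpleGraph V} {m : ℕ}
    (hm : ∀ W : Set V, {S | IsMaxIndepIn G W S}.ncard ≤ m) :
    {S | IsMinOCT G S}.ncard ≤ m ^ 2 := by
  set A := (Set.toFinite {X | IsMaxIndep G X}).toFinset
  have hcover : {S | IsMinOCT G S} ⊆
      ⋃ X ∈ A, (fun Y => (X ∪ Y)ᶜ) '' {Y | IsMaxIndepIn G Xᶜ Y} := by
    intro S hS
    obtain ⟨X, Y, hX, hY, rfl⟩ := hS.exists_isMaxIndep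
    exact Set.mem_biUnion (by simpa [A] using hX) ⟨Y, hY, rfl⟩
  have hA : A.card ≤ m := by
    rw [← Set.ncard_eq_toFinset_card]
    exact (Set.ncard_le_ncard fun X hX => IsMaxIndep.isMaxIndepIn_univ hX).trans (hm _)
  calc {S | IsMinOCT G S}.ncard
      ≤ (⋃ X ∈ A, (fun Y => (X ∪ Y)ᶜ) '' {Y | IsMaxIndepIn G Xᶜ Y}).ncard :=
        Set.ncard_le_ncard hcover
    _ ≤ ∑ X ∈ A, ((fun Y => (X ∪ Y)ᶜ) '' {Y | IsMaxIndepIn G Xᶜ Y}).ncard :=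
        A.set_ncard_biUnion_le _
    _ ≤ ∑ _X ∈ A, m :=
        Finset.sum_le_sum fun X _ => (Set.ncard_image_le (Set.toFinite _)).trans (hm _)
    _ ≤ m ^ 2 := by rw [Finset.sum_const, smul_eq_mul, sq]; gcongr

/-- Every minimal odd cycle transversal of `G` equals `V(G) \ (X ∪ Y)` for some
maximal independent set `X` of `G` and some maximal independent set `Y` of `G - X`; consequently
an `sP₂`-free graph on `n` vertices has at most `(n ^ (2s) + 1)²` minimal odd cycle
transversals. -/
theorem min_oct_structure_and_count {V : Type*} [Fintype V] (G : SimpleGraph V) :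
    (∀ S : Set V, IsMinOCT G S →
      ∃ X Y : Set V, IsMaxIndep G X ∧ IsMaxIndepIn G (Xᶜ : Set V) Y ∧ S = (X ∪ Y)ᶜ) ∧
    (∀ s : ℕ, 1 ≤ s → sP2Free s G →
      {S : Set V | IsMinOCT G S}.ncard ≤ (Fintype.card V ^ (2 * s) + 1) ^ 2) := by
  refine ⟨fun S hS => hS.exists_isMaxIndep, fun s _ hfree => ?_⟩
  refine ncard_setOf_isMinOCT_le fun W => ?_
  refine (ncard_setOf_isMaxIndepIn_le s W ?_).trans (max_one_pow_le_pow_add_one _ _)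
  exact fun ⟨e, _⟩ => not_sP2Free_of_embedding e hfree

end Paper
end

section
/- Let G' be obtained from a connected graph G of girth at least p by adding, for each edge uv of G, a new path of length p - 1 between u and v through new internal vertices (keeping the edge uv), so each edge of G lies on a cycle of length p in G'. Then for every k, G has a connected vertex cover of size at most k if and only if G' has a connected feedback vertex set of size at most k. -/
open SimpleGraph

namespace Paper

variable {V : Type*}

/-- The graph obtained from `G` by adding, for each edge `e` of `G` (with endpoints given by the
orientation `o`), a new path with `q` edges (through `q - 1` new internal vertices) between its
endpoints, keeping all original edges of `G`. -/
def addPaths (G : SimpleGraph V) (q : ℕ) (o : G.edgeSet → V × V) :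
    SimpleGraph (V ⊕ (G.edgeSet × Fin (q - 1))) :=
  SimpleGraph.fromRel fun x y =>
    (∃ a b : V, x = Sum.inl a ∧ y = Sum.inl b ∧ G.Adj a b) ∨
    (∃ (e : G.edgeSet) (i : Fin (q - 1)),
      x = Sum.inl (o e).1 ∧ y = Sum.inr (e, i) ∧ (i : ℕ) = 0) ∨
    (∃ (e : G.edgeSet) (i j : Fin (q - 1)),
      x = Sum.inr (e, i) ∧ y = Sum.inr (e, j) ∧ (j : ℕ) = (i : ℕ) + 1) ∨
    (∃ (e : G.edgeSet) (i : Fin (q - 1)),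
      x = Sum.inr (e, i) ∧ y = Sum.inl (o e).2 ∧ (i : ℕ) = q - 2)


/-!
Outside a vertex cover `S` of `G` the vertices of `G` are independent, so a cycle of `G'`
avoiding `S` passes through an internal vertex of an added path. Internal vertices have degree
two in `G'`, so the cycle contains the whole added path, hence both ends of an edge of `G`, one of
which lies in `S`. Conversely, a feedback vertex set `S'` of `G'` meets every added cycle, so
collapsing each added path onto its first endpoint maps `S'` onto a vertex cover of `G` of no
larger size. Both the inclusion of `V` and the collapse send adjacent vertices to equal or
adjacent ones, which preserves connectivity of the chosen sets.
-/

section General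

variable {α β : Type*}

theorem _root_.SimpleGraph.connected_induce_image {A : SimpleGraph α} {B : SimpleGraph β}
    (f : α → β) {s : Set α} (hf : ∀ x y, A.Adj x y → f x = f y ∨ B.Adj (f x) (f y))
    (hs : (A.induce s).Connected) : (B.induce (f '' s)).Connected := by
  let g : s → f '' s := fun x => ⟨f x, Set.mem_image_of_mem f x.2⟩
  have hg : Function.Surjective g := by
    rintro ⟨_, x, hx, rfl⟩
    exact ⟨⟨x, hx⟩, rfl⟩
  have hreach : ∀ x y, (A.induce s).Reachable x y → (B.induce (f '' s)).Reachable (g x) (g y) := by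
    intro x y hxy
    rw [reachable_iff_reflTransGen] at hxy ⊢
    refine hxy.lift' g fun a b hab => ?_
    rcases hf a b hab with heq | hadj
    · change Relation.ReflTransGen _ (g a) (g b)
      rw [show g a = g b from Subtype.ext heq]
    · exact .single hadj
  have := hs.nonempty.map g
  refine Connected.mk fun u v => ?_
  obtain ⟨x, rfl⟩ := hg u
  obtain ⟨y, rfl⟩ := hg v
  exact hreach x y (hs x y)

theorem _root_.SimpleGraph.Walk.IsCycle.mem_support_of_forall_adj {H : SimpleGraph α}
    {u x a b : α} {c : H.Walk u u} (hc : c.IsCycle) (hx : x ∈ c.support)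
    (hnb : ∀ y, H.Adj x y → y = a ∨ y = b) : a ∈ c.support ∧ b ∈ c.support := by
  obtain ⟨y, z, hyz, hyzs⟩ := Set.ncard_eq_two.mp (hc.ncard_neighborSet_toSubgraph_eq_two hx)
  have hmem : ∀ w, c.toSubgraph.Adj x w → w ∈ c.support ∧ (w = a ∨ w = b) := fun w hw =>
    ⟨c.mem_verts_toSubgraph.mp hw.snd_mem, hnb w hw.adj_sub⟩
  have hy := hmem y (by simp [← Subgraph.mem_neighborSet, hyzs])
  have hz := hmem z (by simp [← Subgraph.mem_neighborSet, hyzs])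
  rcases hy with ⟨hy, rfl | rfl⟩ <;> rcases hz with ⟨hz, rfl | rfl⟩ <;> simp_all

theorem _root_.SimpleGraph.IsAcyclic.not_adj_of_pathGraph_hom {H : SimpleGraph α}
    (hH : H.IsAcyclic) {n : ℕ} (hn : 2 ≤ n) (f : pathGraph (n + 1) →g H)
    (hf : Function.Injective f) : ¬ H.Adj (f 0) (f (Fin.last n)) := by
  intro hadj
  let w : (pathGraph (n + 1)).Path 0 (Fin.last n) :=
    ((pathGraph_connected n).preconnected 0 (Fin.last n)).some.toPath
  have hlen : w.1.length = 1 := by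
    simpa [Path.map] using congrArg (fun p : H.Path _ _ => p.1.length)
      ((hH.subsingleton_path _ _).elim (w.map f hf) (Path.singleton hadj))
  have := pathGraph_adj.mp (Walk.adj_of_length_eq_one hlen)
  simp only [Fin.val_zero, Fin.val_last] at this
  omega

theorem _root_.Nat.endpoints_of_interior_closed {P : ℕ → Prop} {n i : ℕ}
    (step : ∀ j, 0 < j → j < n → P j → P (j - 1) ∧ P (j + 1))
    (hi0 : 0 < i) (hin : i < n) (hi : P i) : P 0 ∧ P n := by
  constructor
  · induction i with
    | zero => omega
    | succ i ih =>
      rcases Nat.eq_zero_or_pos i with rfl | hpos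
      · exact (step 1 one_pos hin hi).1
      · exact ih hpos (by omega) (step _ hi0 hin hi).1
  · induction h : n - i generalizing i with
    | zero => omega
    | succ d ih =>
      rcases Nat.lt_or_ge (i + 1) n with hlt | hge
      · exact ih (by omega) hlt (step _ hi0 hin hi).2 (by omega)
      · simpa [show i + 1 = n by omega] using (step _ hi0 hin hi).2

end General

variable {G : SimpleGraph V} {q : ℕ} {o : G.edgeSet → V × V}

theorem adj_of_orientation (ho : ∀ e : G.edgeSet, s((o e).1, (o e).2) = (e : Sym2 V))
    (e : G.edgeSet) : G.Adj (o e).1 (o e).2 := by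
  rw [← mem_edgeSet, ho e]
  exact e.2

@[simp]
theorem addPaths_adj_inl_inl {a b : V} :
    (addPaths G q o).Adj (Sum.inl a) (Sum.inl b) ↔ G.Adj a b := by
  simp only [addPaths, fromRel_adj]
  constructor
  · rintro ⟨-, h | h⟩ <;> simp_all [G.adj_comm]
  · intro h
    exact ⟨by simpa using h.ne, Or.inl (Or.inl ⟨a, b, rfl, rfl, h⟩)⟩

/-- The `i`-th vertex of the path added for `e`: `(o e).1` at `i = 0`, `(o e).2` at `i = q`,
and also at every `i > q`. -/
def gadgetVertex (o : G.edgeSet → V × V) (q : ℕ) (e : G.edgeSet) (i : ℕ) :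
    V ⊕ (G.edgeSet × Fin (q - 1)) :=
  if h0 : i = 0 then Sum.inl (o e).1
  else if h : i < q then Sum.inr (e, ⟨i - 1, by omega⟩) else Sum.inl (o e).2

theorem inr_eq_gadgetVertex (e : G.edgeSet) (j : Fin (q - 1)) :
    Sum.inr (e, j) = gadgetVertex o q e (j + 1) := by
  simp [gadgetVertex, show (j : ℕ) + 1 < q by omega]

theorem addPaths_adj_gadgetVertex_succ (hq : 2 ≤ q) (e : G.edgeSet) {i : ℕ} (hi : i < q) :
    (addPaths G q o).Adj (gadgetVertex o q e i) (gadgetVertex o q e (i + 1)) := by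
  simp only [addPaths, fromRel_adj, gadgetVertex]
  split_ifs <;> simp_all <;> omega

theorem eq_or_eq_of_addPaths_adj_gadgetVertex (e : G.edgeSet) {i : ℕ} (hi0 : 0 < i) (hiq : i < q)
    {y : V ⊕ (G.edgeSet × Fin (q - 1))} (hy : (addPaths G q o).Adj (gadgetVertex o q e i) y) :
    y = gadgetVertex o q e (i - 1) ∨ y = gadgetVertex o q e (i + 1) := by
  have hx : gadgetVertex o q e i = Sum.inr (e, ⟨i - 1, by omega⟩) := by
    simp [gadgetVertex, hi0.ne', hiq]
  rw [hx] at hy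
  obtain ⟨-, (⟨a, b, h, -⟩ | ⟨e', j, h, -⟩ | ⟨e', j, k, h, rfl, hk⟩ | ⟨e', j, h, rfl, hj⟩) |
    (⟨a, b, -, h, -⟩ | ⟨e', j, rfl, h, hj⟩ | ⟨e', j, k, rfl, h, hk⟩ | ⟨e', j, -, h, -⟩)⟩ := hy
  all_goals simp only [reduceCtorEq, Sum.inr.injEq, Prod.mk.injEq, Fin.ext_iff] at h
  all_goals
    obtain ⟨rfl, hij⟩ := h
    simp only [gadgetVertex]
    split_ifs <;> simp_all [Fin.ext_iff] <;> omega

theorem eq_of_gadgetVertex_eq (ho : ∀ e : G.edgeSet, s((o e).1, (o e).2) = (e : Sym2 V))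
    (e : G.edgeSet) {i j : ℕ} (hi : i ≤ q) (hj : j ≤ q)
    (h : gadgetVertex o q e i = gadgetVertex o q e j) : i = j := by
  have hne := (adj_of_orientation ho e).ne
  simp only [gadgetVertex] at h
  split_ifs at h <;> simp_all <;> omega

def projBase (o : G.edgeSet → V × V) : V ⊕ (G.edgeSet × Fin (q - 1)) → V :=
  Sum.elim id fun x => (o x.1).1

theorem projBase_gadgetVertex_mem (ho : ∀ e : G.edgeSet, s((o e).1, (o e).2) = (e : Sym2 V))
    (e : G.edgeSet) (i : ℕ) : projBase (q := q) o (gadgetVertex o q e i) ∈ (e : Sym2 V) := by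
  rw [← ho e]
  unfold gadgetVertex
  split_ifs <;> simp [projBase]

theorem addPaths_adj_projBase (ho : ∀ e : G.edgeSet, s((o e).1, (o e).2) = (e : Sym2 V))
    {x y : V ⊕ (G.edgeSet × Fin (q - 1))} (h : (addPaths G q o).Adj x y) :
    projBase o x = projBase o y ∨ G.Adj (projBase o x) (projBase o y) := by
  obtain ⟨-, h | h⟩ := h
  all_goals
    rcases h with ⟨a, b, rfl, rfl, hab⟩ | ⟨e, i, rfl, rfl, -⟩ | ⟨e, i, j, rfl, rfl, -⟩ |
      ⟨e, i, rfl, rfl, -⟩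
    all_goals simp_all [projBase, adj_of_orientation ho, G.adj_comm]

theorem exists_inr_mem_support_of_isVC {S : Set V} (hS : IsVC G S)
    {u : V ⊕ (G.edgeSet × Fin (q - 1))} {c : (addPaths G q o).Walk u u} (hc : c.IsCycle)
    (hcS : ∀ a ∈ S, Sum.inl a ∉ c.support) : ∃ e j, Sum.inr (e, j) ∈ c.support := by
  have hadj := c.adj_snd hc.not_nil
  have hsnd : c.snd ∈ c.support := c.getVert_mem_support 1
  rcases u with a | ⟨e, j⟩
  · rcases h : c.snd with b | ⟨e, j⟩
    · rw [h, addPaths_adj_inl_inl] at hadj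
      rw [h] at hsnd
      rcases hS hadj with ha | hb
      exacts [(hcS a ha c.start_mem_support).elim, (hcS b hb hsnd).elim]
    · exact ⟨e, j, h ▸ hsnd⟩
  · exact ⟨e, j, c.start_mem_support⟩

theorem isFVS_image_inl_of_isVC (ho : ∀ e : G.edgeSet, s((o e).1, (o e).2) = (e : Sym2 V))
    {S : Set V} (hS : IsVC G S) :
    IsFVS (addPaths G q o) (Sum.inl '' S) := by
  intro u c hc
  let c' := c.map (Embedding.induce _).toHom
  have hc' : c'.IsCycle := hc.map Subtype.val_injective
  have hcS : ∀ a ∈ S, Sum.inl a ∉ c'.support := by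
    rintro a ha hmem
    simp only [c', Walk.support_map, List.mem_map] at hmem
    obtain ⟨x, -, hx⟩ := hmem
    exact x.2 ⟨a, ha, hx.symm⟩
  obtain ⟨e, j, hj⟩ := exists_inr_mem_support_of_isVC hS hc' hcS
  have hjq : j + 1 < q := by omega
  rw [inr_eq_gadgetVertex] at hj
  obtain ⟨h0, hq'⟩ := Nat.endpoints_of_interior_closed
    (P := fun i => gadgetVertex o q e i ∈ c'.support) (n := q) (i := j + 1)
    (fun i hi0 hiq hi => hc'.mem_support_of_forall_adj hi fun _ hy =>
      eq_or_eq_of_addPaths_adj_gadgetVertex e hi0 hiq hy)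
    (Nat.succ_pos _) (by omega) hj
  simp only [gadgetVertex, dite_true, lt_irrefl, dite_false,
    show q ≠ 0 by omega] at h0 hq'
  rcases hS (adj_of_orientation ho e) with h | h
  exacts [hcS _ h h0, hcS _ h hq']

theorem exists_gadgetVertex_mem_of_isFVS (hq : 2 ≤ q)
    (ho : ∀ e : G.edgeSet, s((o e).1, (o e).2) = (e : Sym2 V))
    {S' : Set (V ⊕ (G.edgeSet × Fin (q - 1)))} (hS' : IsFVS (addPaths G q o) S')
    (e : G.edgeSet) : ∃ i, gadgetVertex o q e i ∈ S' := by
  by_contra! h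
  let f : pathGraph (q + 1) →g (addPaths G q o).induce S'ᶜ :=
    { toFun := fun i => ⟨gadgetVertex o q e i, h i⟩
      map_rel' := by
        intro i j hij
        rcases pathGraph_adj.mp hij with hij | hij
        · simpa [← hij] using addPaths_adj_gadgetVertex_succ hq e (by omega : (i : ℕ) < q)
        · simpa [← hij] using (addPaths_adj_gadgetVertex_succ hq e (by omega : (j : ℕ) < q)).symm }
  have hf : Function.Injective f := fun i j hij =>
    Fin.ext (eq_of_gadgetVertex_eq ho e (by omega) (by omega) (congrArg Subtype.val hij))
  refine IsAcyclic.not_adj_of_pathGraph_hom hS' hq f hf ?_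
  change (addPaths G q o).Adj (gadgetVertex o q e 0) (gadgetVertex o q e q)
  simpa [gadgetVertex, show q ≠ 0 by omega] using adj_of_orientation ho e

theorem isVC_image_projBase (ho : ∀ e : G.edgeSet, s((o e).1, (o e).2) = (e : Sym2 V))
    {S' : Set (V ⊕ (G.edgeSet × Fin (q - 1)))} (h : ∀ e, ∃ i, gadgetVertex o q e i ∈ S') :
    IsVC G (projBase o '' S') := by
  intro u v huv
  obtain ⟨i, hi⟩ := h ⟨s(u, v), huv⟩
  rcases Sym2.mem_iff.mp (projBase_gadgetVertex_mem ho ⟨s(u, v), huv⟩ i) with h | h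
  exacts [Or.inl ⟨_, hi, h⟩, Or.inr ⟨_, hi, h⟩]

theorem connected_vc_iff_connected_fvs_of_gadget_general {V : Type*} [Fintype V] (G : SimpleGraph V)
    (p : ℕ) (hp : 3 ≤ p)
    (o : G.edgeSet → V × V)
    (ho : ∀ e : G.edgeSet, s((o e).1, (o e).2) = (e : Sym2 V)) (k : ℕ) :
    (∃ S : Set V, IsVC G S ∧ ConnSet G S ∧ S.ncard ≤ k) ↔
      (∃ S' : Set (V ⊕ (G.edgeSet × Fin (p - 1 - 1))),
        IsFVS (addPaths G (p - 1) o) S' ∧ ConnSet (addPaths G (p - 1) o) S' ∧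
          S'.ncard ≤ k) := by
  have hq : 2 ≤ p - 1 := by omega
  constructor
  · rintro ⟨S, hVC, hConn, hcard⟩
    refine ⟨Sum.inl '' S, isFVS_image_inl_of_isVC ho hVC, ?_, ?_⟩
    · exact connected_induce_image Sum.inl (fun _ _ h => Or.inr (addPaths_adj_inl_inl.mpr h)) hConn
    · rwa [Set.ncard_image_of_injective _ Sum.inl_injective]
  · rintro ⟨S', hFVS, hConn', hcard⟩
    refine ⟨projBase o '' S', isVC_image_projBase ho (exists_gadgetVertex_mem_of_isFVS hq ho hFVS),
      connected_induce_image _ (fun _ _ => addPaths_adj_projBase ho) hConn', ?_⟩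
    exact (Set.ncard_image_le S'.toFinite).trans hcard

/-- Let `G` be a connected graph of girth at least `p` and let `G'` be obtained
from `G` by adding, for each edge `uv`, a new path of length `p - 1` between `u` and `v`
(keeping the edge `uv`), so that each edge of `G` lies on a cycle of length `p` in `G'`. Then
for every `k`, `G` has a connected vertex cover of size at most `k` iff `G'` has a connected
feedback vertex set of size at most `k`. -/
theorem connected_vc_iff_connected_fvs_of_gadget {V : Type*} [Fintype V] (G : SimpleGraph V)
    (hG : G.Connected) (p : ℕ) (hp : 3 ≤ p) (hgirth : (p : ℕ∞) ≤ G.girth)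
    (o : G.edgeSet → V × V)
    (ho : ∀ e : G.edgeSet, s((o e).1, (o e).2) = (e : Sym2 V)) (k : ℕ) :
    (∃ S : Set V, IsVC G S ∧ ConnSet G S ∧ S.ncard ≤ k) ↔
      (∃ S' : Set (V ⊕ (G.edgeSet × Fin (p - 1 - 1))),
        IsFVS (addPaths G (p - 1) o) S' ∧ ConnSet (addPaths G (p - 1) o) S' ∧
          S'.ncard ≤ k) :=
  connected_vc_iff_connected_fvs_of_gadget_general G p hp o ho k
end Paper
end
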